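/- (Marsden identity for the alternative quadratic S-basis.) Let T2 ∈ ℝ^{12×12} be the identity matrix except that its principal submatrix on rows and columns (3, 7, 11) equals [[1/2, 1/2, 0], [0, 1/2, 1/2], [1/2, 0, 1/2]]. Then for all y ∈ ℝ², T2·ψ̃2(y) = ψ2(y); consequently, for all x, y ∈ ℝ², R1(β(x))·(R2(β(x))·T2)·ψ̃2(y) = (1 − x·y)²·𝟙, where 𝟙 ∈ ℝ^{12} is the all-ones vector. -/

import Mathlib

/-!
Since `cpl p y = 1 - p·y` is affine in `p`, every entry of `ψ2(y)` and `ψ̃2(y)` is a quadratic form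
in `c1, c2, c3`, and `1 - x·y = β1 c1 + β2 c2 + β3 c3`. Writing `γj = 2βj - (β1 + β2 + β3)` makes
`R1` and `R2` homogeneous of degree one in `β`, and the identity then factors through a degree-one
Marsden identity: `R2(β) ψ2 = (β·c) ψ1` and `R1(β) ψ1 = (β·c) 𝟙`, where `ψ1` collects `c` at
`p1, …, p6`, at the midpoints of `p4p6`, `p4p5`, `p5p6`, and at `p10`.
-/

/-- Euclidean inner product on `ℝ²`. -/
def dotR2 (x y : ℝ × ℝ) : ℝ := x.1 * y.1 + x.2 * y.2

/-- The linear polynomial `c_p(y) = 1 − p·y` attached to a point `p`. -/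
noncomputable def cpl (p y : ℝ × ℝ) : ℝ := 1 - dotR2 p y

/-- The 12×10 recursion matrix `R1` (with `γj = 2 βj − c`; the paper's `R1` is `c = 1`,
the derivative matrix `U1` is `c = 0`). -/
noncomputable def R1g (b1 b2 b3 c : ℝ) : Matrix (Fin 12) (Fin 10) ℝ :=
  !![2*b1 - c, 0, 0, 0, 0, 2*(b3 - b2), 4*b2, 0, 0, 0;
     2*b1 - c, 0, 0, 2*(b2 - b3), 0, 0, 4*b3, 0, 0, 0;
     0, 2*b2 - c, 0, 2*(b1 - b3), 0, 0, 0, 4*b3, 0, 0;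
     0, 2*b2 - c, 0, 0, 2*(b3 - b1), 0, 0, 4*b1, 0, 0;
     0, 0, 2*b3 - c, 0, 2*(b2 - b1), 0, 0, 0, 4*b1, 0;
     0, 0, 2*b3 - c, 0, 0, 2*(b1 - b2), 0, 0, 4*b2, 0;
     0, 0, 0, 0, 0, 2*(b3 - b2), 4*(b1 - b3), 0, 0, -3*(2*b1 - c);
     0, 0, 0, 2*(b2 - b3), 0, 0, 4*(b1 - b2), 0, 0, -3*(2*b1 - c);
     0, 0, 0, 2*(b1 - b3), 0, 0, 0, 4*(b2 - b1), 0, -3*(2*b2 - c);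
     0, 0, 0, 0, 2*(b3 - b1), 0, 0, 4*(b2 - b3), 0, -3*(2*b2 - c);
     0, 0, 0, 0, 2*(b2 - b1), 0, 0, 0, 4*(b3 - b2), -3*(2*b3 - c);
     0, 0, 0, 0, 0, 2*(b1 - b2), 0, 0, 4*(b3 - b1), -3*(2*b3 - c)]

/-- The 10×12 recursion matrix `R2` (with `γj = 2 βj − c`). -/
noncomputable def R2g (b1 b2 b3 c : ℝ) : Matrix (Fin 10) (Fin 12) ℝ :=
  !![2*b1 - c, 2*b2, 0, 0, 0, 0, 0, 0, 0, 0, 0, 2*b3;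
     0, 0, 0, 2*b1, 2*b2 - c, 2*b3, 0, 0, 0, 0, 0, 0;
     0, 0, 0, 0, 0, 0, 0, 2*b2, 2*b3 - c, 2*b1, 0, 0;
     0, b1 - b3, 3*b3, b2 - b3, 0, 0, 0, 0, 0, 0, 0, 0;
     0, 0, 0, 0, 0, b2 - b1, 3*b1, b3 - b1, 0, 0, 0, 0;
     0, 0, 0, 0, 0, 0, 0, 0, 0, b3 - b2, 3*b2, b1 - b2;
     0, (b1 - b3)/2, 3*b2/2, 0, 0, 0, 0, 0, 0, 0, 3*b3/2, (b1 - b2)/2;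
     0, 0, 3*b1/2, (b2 - b3)/2, 0, (b2 - b1)/2, 3*b3/2, 0, 0, 0, 0, 0;
     0, 0, 0, 0, 0, 0, 3*b2/2, (b3 - b1)/2, 0, (b3 - b2)/2, 3*b1/2, 0;
     0, 0, -(2*b3 - c), 0, 0, 0, -(2*b1 - c), 0, 0, 0, -(2*b2 - c), 0]

/-- The 12×16 recursion matrix `R3` (with `γj = 2 βj − c`). -/
noncomputable def R3g (b1 b2 b3 c : ℝ) : Matrix (Fin 12) (Fin 16) ℝ :=
  !![2*b1 - c, 2*b2, 0, 0, 0, 0, 0, 0, 0, 0, 0, 2*b3, 0, 0, 0, 0;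
     0, b1 - b3, b2, 0, 0, 0, 0, 0, 0, 0, 0, 0, 2*b3, 0, 0, 0;
     0, 0, (b1 + b2)/3, 0, 0, 0, b3/3, 0, 0, 0, b3/3, 0, 2*b1/3, 2*b2/3, 0, b3/3;
     0, 0, b1, b2 - b3, 0, 0, 0, 0, 0, 0, 0, 0, 0, 2*b3, 0, 0;
     0, 0, 0, 2*b1, 2*b2 - c, 2*b3, 0, 0, 0, 0, 0, 0, 0, 0, 0, 0;
     0, 0, 0, 0, 0, b2 - b1, b3, 0, 0, 0, 0, 0, 0, 2*b1, 0, 0;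
     0, 0, b1/3, 0, 0, 0, (b2 + b3)/3, 0, 0, 0, b1/3, 0, 0, 2*b2/3, 2*b3/3, b1/3;
     0, 0, 0, 0, 0, 0, b2, b3 - b1, 0, 0, 0, 0, 0, 0, 2*b1, 0;
     0, 0, 0, 0, 0, 0, 0, 2*b2, 2*b3 - c, 2*b1, 0, 0, 0, 0, 0, 0;
     0, 0, 0, 0, 0, 0, 0, 0, 0, b3 - b2, b1, 0, 0, 0, 2*b2, 0;
     0, 0, b2/3, 0, 0, 0, b2/3, 0, 0, 0, (b1 + b3)/3, 0, 2*b1/3, 0, 2*b3/3, b2/3;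
     0, 0, 0, 0, 0, 0, 0, 0, 0, 0, b3, b1 - b2, 2*b2, 0, 0, 0]

/-- The recursion matrix `R1(β)`. -/
noncomputable def R1 (b1 b2 b3 : ℝ) : Matrix (Fin 12) (Fin 10) ℝ := R1g b1 b2 b3 1
/-- The recursion matrix `R2(β)`. -/
noncomputable def R2 (b1 b2 b3 : ℝ) : Matrix (Fin 10) (Fin 12) ℝ := R2g b1 b2 b3 1
/-- The recursion matrix `R3(β)`. -/
noncomputable def R3 (b1 b2 b3 : ℝ) : Matrix (Fin 12) (Fin 16) ℝ := R3g b1 b2 b3 1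

/-- The 12×12 matrix `T2`: the identity except that its principal submatrix on
rows/columns (3,7,11) (1-based; here 0-based indices 2,6,10) is
`[[1/2,1/2,0],[0,1/2,1/2],[1/2,0,1/2]]`. -/
noncomputable def T2 : Matrix (Fin 12) (Fin 12) ℝ :=
  Matrix.of fun i j =>
    if i = 2 then (if j = 2 ∨ j = 6 then 1/2 else 0)
    else if i = 6 then (if j = 6 ∨ j = 10 then 1/2 else 0)
    else if i = 10 then (if j = 2 ∨ j = 10 then 1/2 else 0)
    else if i = j then 1 else 0

open Matrix

lemma cpl_midpoint (p q y : ℝ × ℝ) : cpl ((2⁻¹ : ℝ) • (p + q)) y = (cpl p y + cpl q y) / 2 := by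
  simp only [cpl, dotR2, Prod.smul_fst, Prod.smul_snd, Prod.fst_add, Prod.snd_add, smul_eq_mul]
  ring

lemma cpl_centroid (p q r y : ℝ × ℝ) :
    cpl ((3⁻¹ : ℝ) • (p + q + r)) y = (cpl p y + cpl q y + cpl r y) / 3 := by
  simp only [cpl, dotR2, Prod.smul_fst, Prod.smul_snd, Prod.fst_add, Prod.snd_add, smul_eq_mul]
  ring

lemma cpl_affineCombination {b1 b2 b3 : ℝ} (hb : b1 + b2 + b3 = 1) (p1 p2 p3 y : ℝ × ℝ) :
    cpl (b1 • p1 + b2 • p2 + b3 • p3) y = b1 * cpl p1 y + b2 * cpl p2 y + b3 * cpl p3 y := by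
  simp only [cpl, dotR2, Prod.smul_fst, Prod.smul_snd, Prod.fst_add, Prod.snd_add, smul_eq_mul]
  linear_combination -hb

/- `ψ2(y)` and `ψ̃2(y)` written through `cj = cpl pj y` for `j = 1, 2, 3`: the values `c4, c5, c6`
at the edge midpoints and `c10` at the centroid are their averages. -/
noncomputable def psi2 (c1 c2 c3 : ℝ) : Fin 12 → ℝ :=
  let c4 := (c1 + c2) / 2
  let c5 := (c2 + c3) / 2
  let c6 := (c3 + c1) / 2
  let c10 := (c1 + c2 + c3) / 3
  ![c1 ^ 2, c1 * c4, c4 * c10, c2 * c4, c2 ^ 2, c2 * c5, c5 * c10, c3 * c5,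
    c3 ^ 2, c3 * c6, c6 * c10, c1 * c6]

noncomputable def psiTilde2 (c1 c2 c3 : ℝ) : Fin 12 → ℝ :=
  let c4 := (c1 + c2) / 2
  let c5 := (c2 + c3) / 2
  let c6 := (c3 + c1) / 2
  let c10 := (c1 + c2 + c3) / 3
  ![c1 ^ 2, c1 * c4, c1 * c10, c2 * c4, c2 ^ 2, c2 * c5, c2 * c10, c3 * c5,
    c3 ^ 2, c3 * c6, c3 * c10, c1 * c6]

noncomputable def psi1 (c1 c2 c3 : ℝ) : Fin 10 → ℝ :=
  let c4 := (c1 + c2) / 2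
  let c5 := (c2 + c3) / 2
  let c6 := (c3 + c1) / 2
  ![c1, c2, c3, c4, c5, c6, (c4 + c6) / 2, (c4 + c5) / 2, (c5 + c6) / 2, (c1 + c2 + c3) / 3]

theorem T2_mulVec_psiTilde2 (c1 c2 c3 : ℝ) : T2 *ᵥ psiTilde2 c1 c2 c3 = psi2 c1 c2 c3 := by
  ext i
  fin_cases i <;>
    simp only [T2, psiTilde2, psi2, mulVec, dotProduct, of_apply, Fin.sum_univ_succ,
      Fin.sum_univ_zero, cons_val, cons_val_zero, cons_val_succ, Fin.isValue, Fin.reduceFinMk,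
      Fin.reduceSucc, Fin.reduceEq, ↓reduceIte, or_true, or_false, or_self] <;>
    ring

theorem R2g_mulVec_psi2 (b1 b2 b3 c1 c2 c3 : ℝ) :
    R2g b1 b2 b3 (b1 + b2 + b3) *ᵥ psi2 c1 c2 c3 =
      (b1 * c1 + b2 * c2 + b3 * c3) • psi1 c1 c2 c3 := by
  ext i
  fin_cases i <;>
    simp only [R2g, psi2, psi1, mulVec, dotProduct, of_apply, Fin.sum_univ_succ,
      Fin.sum_univ_zero, cons_val, cons_val_zero, cons_val_succ, Pi.smul_apply, smul_eq_mul,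
      Fin.isValue, Fin.reduceFinMk] <;>
    ring

theorem R1g_mulVec_psi1 (b1 b2 b3 c1 c2 c3 : ℝ) :
    R1g b1 b2 b3 (b1 + b2 + b3) *ᵥ psi1 c1 c2 c3 = fun _ => b1 * c1 + b2 * c2 + b3 * c3 := by
  ext i
  fin_cases i <;>
    simp only [R1g, psi1, mulVec, dotProduct, of_apply, Fin.sum_univ_succ, Fin.sum_univ_zero,
      cons_val, cons_val_zero, cons_val_succ, Fin.isValue, Fin.reduceFinMk] <;>
    ring

theorem R1_mulVec_R2_mulVec_psi2 {b1 b2 b3 : ℝ} (hb : b1 + b2 + b3 = 1) (c1 c2 c3 : ℝ) :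
    R1 b1 b2 b3 *ᵥ (R2 b1 b2 b3 *ᵥ psi2 c1 c2 c3) =
      fun _ => (b1 * c1 + b2 * c2 + b3 * c3) ^ 2 := by
  rw [R1, R2, ← hb, R2g_mulVec_psi2, mulVec_smul, R1g_mulVec_psi1]
  ext
  simp only [Pi.smul_apply, smul_eq_mul, sq]

theorem marsden_alternative_quadratic_general
    (p1 p2 p3 : ℝ × ℝ)
    (p4 p5 p6 p10 : ℝ × ℝ)
    (h4 : p4 = (2⁻¹ : ℝ) • (p1 + p2))
    (h5 : p5 = (2⁻¹ : ℝ) • (p2 + p3))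
    (h6 : p6 = (2⁻¹ : ℝ) • (p3 + p1))
    (h10 : p10 = (3⁻¹ : ℝ) • (p1 + p2 + p3)) :
    (∀ y : ℝ × ℝ,
      T2.mulVec
        ![cpl p1 y ^ 2, cpl p1 y * cpl p4 y, cpl p1 y * cpl p10 y, cpl p2 y * cpl p4 y,
          cpl p2 y ^ 2, cpl p2 y * cpl p5 y, cpl p2 y * cpl p10 y, cpl p3 y * cpl p5 y,
          cpl p3 y ^ 2, cpl p3 y * cpl p6 y, cpl p3 y * cpl p10 y, cpl p1 y * cpl p6 y] =
        ![cpl p1 y ^ 2, cpl p1 y * cpl p4 y, cpl p4 y * cpl p10 y, cpl p2 y * cpl p4 y,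
          cpl p2 y ^ 2, cpl p2 y * cpl p5 y, cpl p5 y * cpl p10 y, cpl p3 y * cpl p5 y,
          cpl p3 y ^ 2, cpl p3 y * cpl p6 y, cpl p6 y * cpl p10 y, cpl p1 y * cpl p6 y]) ∧
    (∀ (x y : ℝ × ℝ) (b1 b2 b3 : ℝ),
      x = b1 • p1 + b2 • p2 + b3 • p3 → b1 + b2 + b3 = 1 →
      (R1 b1 b2 b3 * (R2 b1 b2 b3 * T2)).mulVec
        ![cpl p1 y ^ 2, cpl p1 y * cpl p4 y, cpl p1 y * cpl p10 y, cpl p2 y * cpl p4 y,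
          cpl p2 y ^ 2, cpl p2 y * cpl p5 y, cpl p2 y * cpl p10 y, cpl p3 y * cpl p5 y,
          cpl p3 y ^ 2, cpl p3 y * cpl p6 y, cpl p3 y * cpl p10 y, cpl p1 y * cpl p6 y] =
        fun _ : Fin 12 => (1 - dotR2 x y) ^ 2) := by
  subst h4 h5 h6 h10
  simp only [cpl_midpoint, cpl_centroid]
  -- the two vectors of the statement are now `psiTilde2` and `psi2` of `cpl p1 y, cpl p2 y, cpl p3 y`
  refine ⟨fun y => T2_mulVec_psiTilde2 (cpl p1 y) (cpl p2 y) (cpl p3 y), ?_⟩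
  rintro x y b1 b2 b3 rfl hb
  change _ = fun _ => cpl (b1 • p1 + b2 • p2 + b3 • p3) y ^ 2
  rw [← mulVec_mulVec, ← mulVec_mulVec, cpl_affineCombination hb,
    ← R1_mulVec_R2_mulVec_psi2 hb, ← T2_mulVec_psiTilde2]
  rfl

/-- Marsden identity for the alternative quadratic S-basis:
`T2 ψ̃2(y) = ψ2(y)` for all `y`, and consequently
`R1(β(x)) (R2(β(x)) T2) ψ̃2(y) = (1 − x·y)² 𝟙`. -/
theorem marsden_alternative_quadratic
    (p1 p2 p3 : ℝ × ℝ)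
    (hind : AffineIndependent ℝ ![p1, p2, p3])
    (p4 p5 p6 p10 : ℝ × ℝ)
    (h4 : p4 = (2⁻¹ : ℝ) • (p1 + p2))
    (h5 : p5 = (2⁻¹ : ℝ) • (p2 + p3))
    (h6 : p6 = (2⁻¹ : ℝ) • (p3 + p1))
    (h10 : p10 = (3⁻¹ : ℝ) • (p1 + p2 + p3)) :
    (∀ y : ℝ × ℝ,
      T2.mulVec
        ![cpl p1 y ^ 2, cpl p1 y * cpl p4 y, cpl p1 y * cpl p10 y, cpl p2 y * cpl p4 y,
          cpl p2 y ^ 2, cpl p2 y * cpl p5 y, cpl p2 y * cpl p10 y, cpl p3 y * cpl p5 y,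
          cpl p3 y ^ 2, cpl p3 y * cpl p6 y, cpl p3 y * cpl p10 y, cpl p1 y * cpl p6 y] =
        ![cpl p1 y ^ 2, cpl p1 y * cpl p4 y, cpl p4 y * cpl p10 y, cpl p2 y * cpl p4 y,
          cpl p2 y ^ 2, cpl p2 y * cpl p5 y, cpl p5 y * cpl p10 y, cpl p3 y * cpl p5 y,
          cpl p3 y ^ 2, cpl p3 y * cpl p6 y, cpl p6 y * cpl p10 y, cpl p1 y * cpl p6 y]) ∧
    (∀ (x y : ℝ × ℝ) (b1 b2 b3 : ℝ),
      x = b1 • p1 + b2 • p2 + b3 • p3 → b1 + b2 + b3 = 1 →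
      (R1 b1 b2 b3 * (R2 b1 b2 b3 * T2)).mulVec
        ![cpl p1 y ^ 2, cpl p1 y * cpl p4 y, cpl p1 y * cpl p10 y, cpl p2 y * cpl p4 y,
          cpl p2 y ^ 2, cpl p2 y * cpl p5 y, cpl p2 y * cpl p10 y, cpl p3 y * cpl p5 y,
          cpl p3 y ^ 2, cpl p3 y * cpl p6 y, cpl p3 y * cpl p10 y, cpl p1 y * cpl p6 y] =
        fun _ : Fin 12 => (1 - dotR2 x y) ^ 2) :=
  marsden_alternative_quadratic_general p1 p2 p3 p4 p5 p6 p10 h4 h5 h6 h10
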